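/- arXiv:2504.21723 — 5 statements merged into one kernel-verified Lean document; each statement's English description precedes it below -/
import Mathlib

section
/- The function Q̂(p) = ρ₁ c₁ ((p+1) ln(p+1) − p) − ρ₂ has a unique zero point p₀ on the interval (0, c₂], where c₂ = 2^{(1 + √(max{ρ₂/(ρ₁c₁), 1} − 1}) / ln 2}. -/
open Set

/-- For positive constants `ρ₁, c₁, ρ₂`, the function
`Q̂(p) = ρ₁ c₁ ((p+1) ln(p+1) − p) − ρ₂` has a unique zero point `p₀` on the
interval `(0, c₂]`, where `c₂ = 2^{(1 + √(max{ρ₂/(ρ₁c₁), 1} − 1)) / ln 2}`. -/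
theorem Qhat_unique_zero (ρ₁ c₁ ρ₂ : ℝ) (hρ₁ : 0 < ρ₁) (hc₁ : 0 < c₁) (hρ₂ : 0 < ρ₂) :
    let Qhat : ℝ → ℝ := fun p => ρ₁ * c₁ * ((p + 1) * Real.log (p + 1) - p) - ρ₂
    let c₂ : ℝ := (2 : ℝ) ^ ((1 + Real.sqrt (max (ρ₂ / (ρ₁ * c₁)) 1 - 1)) / Real.log 2)
    ∃! p₀ : ℝ, p₀ ∈ Ioc 0 c₂ ∧ Qhat p₀ = 0 := by
  intro Qhat c₂
  have hρc : 0 < ρ₁ * c₁ := mul_pos hρ₁ hc₁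
  set s : ℝ := Real.sqrt (max (ρ₂ / (ρ₁ * c₁)) 1 - 1) with hs
  have hs0 : 0 ≤ s := Real.sqrt_nonneg _
  have hM1 : (0:ℝ) ≤ max (ρ₂ / (ρ₁ * c₁)) 1 - 1 := by
    have := le_max_right (ρ₂ / (ρ₁ * c₁)) 1; linarith
  have hs2 : s ^ 2 = max (ρ₂ / (ρ₁ * c₁)) 1 - 1 := Real.sq_sqrt hM1
  -- c₂ = exp (1 + s)
  have hc2 : c₂ = Real.exp (1 + s) := by
    show (2:ℝ) ^ ((1 + s) / Real.log 2) = _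
    rw [Real.rpow_def_of_pos (by norm_num : (0:ℝ) < 2)]
    rw [mul_div_assoc', mul_comm, mul_div_assoc, div_self (Real.log_ne_zero_of_pos_of_ne_one (by norm_num) (by norm_num)), mul_one]
  have hc2pos : 0 < c₂ := hc2 ▸ Real.exp_pos _
  -- continuity
  have hcont : ContinuousOn Qhat (Ici (0:ℝ)) := by
    intro x hx
    have hx1 : x + 1 ≠ 0 := by have : (0:ℝ) ≤ x := hx; positivity
    have hlog : ContinuousAt (fun p : ℝ => Real.log (p + 1)) x := by
      have : ContinuousAt (fun p : ℝ => p + 1) x :=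
        (continuous_id.add continuous_const).continuousAt
      exact this.log hx1
    exact (((continuousAt_const.mul (((continuous_id.add continuous_const).continuousAt.mul
      hlog).sub continuous_id.continuousAt)).sub continuousAt_const)).continuousWithinAt
  -- strict mono on Ici 0
  have hderiv : ∀ p ∈ interior (Ici (0:ℝ)), HasDerivAt Qhat (ρ₁ * c₁ * Real.log (p + 1)) p := by
    intro p hp
    rw [interior_Ici] at hp
    have hp1 : (0:ℝ) < p + 1 := by have : (0:ℝ) < p := hp; linarith
    have h1 : HasDerivAt (fun p : ℝ => p + 1) 1 p := (hasDerivAt_id p).add_const 1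
    have h2 : HasDerivAt (fun p : ℝ => Real.log (p + 1)) (1 / (p + 1)) p := by
      simpa [Function.comp_def] using (Real.hasDerivAt_log hp1.ne').comp p h1
    have h3 : HasDerivAt (fun p : ℝ => (p + 1) * Real.log (p + 1))
        (1 * Real.log (p + 1) + (p + 1) * (1 / (p + 1))) p := h1.mul h2
    have h4 : HasDerivAt (fun p : ℝ => (p + 1) * Real.log (p + 1) - p)
        (Real.log (p + 1)) p := by
      have := (h3.sub (hasDerivAt_id p))
      refine this.congr_deriv ?_
      rw [mul_one_div_cancel hp1.ne']; ring
    have := (h4.const_mul (ρ₁ * c₁)).sub_const ρ₂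
    simpa [Qhat] using this
  have hmono : StrictMonoOn Qhat (Ici (0:ℝ)) := by
    apply strictMonoOn_of_deriv_pos (convex_Ici 0) hcont
    intro p hp
    rw [(hderiv p hp).deriv]
    rw [interior_Ici] at hp
    have : (0:ℝ) < Real.log (p + 1) := Real.log_pos (by linarith [mem_Ioi.mp hp])
    positivity
  -- Qhat 0 < 0
  have h0 : Qhat 0 < 0 := by
    show ρ₁ * c₁ * ((0 + 1) * Real.log (0 + 1) - 0) - ρ₂ < 0
    simp [Real.log_one]; linarith
  -- Qhat c₂ ≥ 0
  have hQc2 : 0 ≤ Qhat c₂ := by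
    have hlog : Real.log (c₂ + 1) ≥ 1 + s := by
      calc Real.log (c₂ + 1) ≥ Real.log c₂ := by
            apply Real.log_le_log hc2pos; linarith
        _ = 1 + s := by rw [hc2, Real.log_exp]
    have hcs : s ≤ c₂ := by
      rw [hc2]
      calc s ≤ 1 + s + 1 := by linarith
        _ ≤ Real.exp (1 + s) := Real.add_one_le_exp _
    have key : (c₂ + 1) * Real.log (c₂ + 1) - c₂ ≥ ρ₂ / (ρ₁ * c₁) := by
      have h1 : (c₂ + 1) * Real.log (c₂ + 1) ≥ (c₂ + 1) * (1 + s) := by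
        apply mul_le_mul_of_nonneg_left hlog (by linarith)
      have h2 : (c₂ + 1) * (1 + s) - c₂ = c₂ * s + 1 + s := by ring
      have h3 : s * s ≤ c₂ * s := mul_le_mul_of_nonneg_right hcs hs0
      have h4 : ρ₂ / (ρ₁ * c₁) ≤ s ^ 2 + 1 := by
        rw [hs2]; have := le_max_left (ρ₂ / (ρ₁ * c₁)) 1; linarith
      nlinarith
    show 0 ≤ ρ₁ * c₁ * ((c₂ + 1) * Real.log (c₂ + 1) - c₂) - ρ₂
    have : ρ₁ * c₁ * (ρ₂ / (ρ₁ * c₁)) ≤ ρ₁ * c₁ * ((c₂ + 1) * Real.log (c₂ + 1) - c₂) :=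
      mul_le_mul_of_nonneg_left key hρc.le
    rw [mul_div_cancel₀ _ hρc.ne'] at this
    linarith
  -- existence by IVT
  obtain ⟨p₀, hp₀mem, hp₀⟩ : ∃ p₀ ∈ Icc (0:ℝ) c₂, Qhat p₀ = 0 := by
    have := intermediate_value_Icc hc2pos.le (hcont.mono (Icc_subset_Ici_self))
    have h0m : (0:ℝ) ∈ Icc (Qhat 0) (Qhat c₂) := ⟨h0.le, hQc2⟩
    obtain ⟨p₀, hmem, heq⟩ := this h0m
    exact ⟨p₀, hmem, heq⟩
  have hp₀pos : 0 < p₀ := by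
    rcases lt_or_eq_of_le hp₀mem.1 with h | h
    · exact h
    · exfalso; rw [← h] at hp₀; linarith
  refine ⟨p₀, ⟨⟨hp₀pos, hp₀mem.2⟩, hp₀⟩, ?_⟩
  rintro y ⟨⟨hy1, hy2⟩, hyQ⟩
  exact hmono.injOn (mem_Ici.mpr hy1.le) (mem_Ici.mpr hp₀pos.le) (by rw [hyQ, hp₀])
end

section
/- Suppose each lₖ : ℝ^d → ℝ is twice continuously differentiable, H-smooth (gradients H-Lipschitz), has gradient norm bounded by Φ, and λ-Lipschitz Hessian. Then for any α ∈ (0, 1/H], the meta-function Lₖ(θ) = lₖ(θ − α ∇lₖ(θ)) is smooth with parameter H_L = 4H + αλΦ, i.e., ‖∇Lₖ(θ₁) − ∇Lₖ(θ₂)‖ ≤ (4H + αλΦ)‖θ₁ − θ₂‖ for all θ₁, θ₂ ∈ ℝ^d. -/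
open Real

section Aux

variable {E : Type*} [NormedAddCommGroup E] [InnerProductSpace ℝ E] [CompleteSpace E]

lemma gradient_sub_norm (f : E → ℝ) (x y : E) :
    ‖gradient f x - gradient f y‖ = ‖fderiv ℝ f x - fderiv ℝ f y‖ := by
  have : gradient f x - gradient f y =
      (InnerProductSpace.toDual ℝ E).symm (fderiv ℝ f x - fderiv ℝ f y) := by
    rw [map_sub]; rfl
  rw [this, LinearIsometryEquiv.norm_map]

lemma gradient_norm_eq (f : E → ℝ) (x : E) : ‖gradient f x‖ = ‖fderiv ℝ f x‖ := by
  rw [show gradient f x = (InnerProductSpace.toDual ℝ E).symm (fderiv ℝ f x) from rfl,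
    LinearIsometryEquiv.norm_map]

lemma meta_function_smooth_aux
    (l : E → ℝ) (H Φ lam α : ℝ)
    (hl : ContDiff ℝ 2 l) (hH : 0 < H)
    (hsmooth : ∀ θ₁ θ₂, ‖gradient l θ₁ - gradient l θ₂‖ ≤ H * ‖θ₁ - θ₂‖)
    (hgrad : ∀ θ, ‖gradient l θ‖ ≤ Φ)
    (hhess : ∀ θ₁ θ₂, ‖fderiv ℝ (gradient l) θ₁ - fderiv ℝ (gradient l) θ₂‖ ≤
      lam * ‖θ₁ - θ₂‖)
    (hα0 : 0 < α) (hα1 : α ≤ 1 / H) :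
    ∀ θ₁ θ₂, ‖gradient (fun θ => l (θ - α • gradient l θ)) θ₁ -
        gradient (fun θ => l (θ - α • gradient l θ)) θ₂‖ ≤
      (4 * H + α * lam * Φ) * ‖θ₁ - θ₂‖ := by
  have hαH : α * H ≤ 1 := by
    rw [le_div_iff₀ hH] at hα1; linarith
  have hΦ0 : 0 ≤ Φ := (norm_nonneg _).trans (hgrad 0)
  -- differentiability of l and of its gradient
  have hld : Differentiable ℝ l := hl.differentiable (by norm_num)
  have hfd : Differentiable ℝ (fderiv ℝ l) :=
    (hl.fderiv_right (m := 1) (by norm_num)).differentiable one_ne_zero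
  have hgradd : Differentiable ℝ (gradient l) := by
    have : gradient l = fun x => (InnerProductSpace.toDual ℝ E).symm (fderiv ℝ l x) := rfl
    rw [this]
    exact (InnerProductSpace.toDual ℝ E).symm.toContinuousLinearEquiv.differentiable.comp hfd
  -- g and its derivative
  set g : E → E := fun θ => θ - α • gradient l θ with hgdef
  have hgdiff : Differentiable ℝ g := differentiable_id.sub (hgradd.const_smul α)
  have hfg : ∀ θ, fderiv ℝ g θ =
      ContinuousLinearMap.id ℝ E - α • fderiv ℝ (gradient l) θ := by
    intro θ
    rw [hgdef]
    rw [fderiv_fun_sub differentiableAt_fun_id ((hgradd θ).fun_const_smul α), fderiv_fun_id,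
      fderiv_fun_const_smul (hgradd θ)]
  -- bound on the Hessian
  have hLip : LipschitzWith (Real.toNNReal H) (gradient l) := by
    apply LipschitzWith.of_dist_le_mul
    intro x y
    rw [dist_eq_norm, dist_eq_norm, Real.coe_toNNReal _ hH.le]
    exact hsmooth x y
  have hDb : ∀ θ, ‖fderiv ℝ (gradient l) θ‖ ≤ H := by
    intro θ
    have := norm_fderiv_le_of_lipschitz ℝ (x₀ := θ) hLip
    rwa [Real.coe_toNNReal _ hH.le] at this
  -- g is 2-Lipschitz
  have hgLip : ∀ θ₁ θ₂, ‖g θ₁ - g θ₂‖ ≤ 2 * ‖θ₁ - θ₂‖ := by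
    intro θ₁ θ₂
    have heq : g θ₁ - g θ₂ = (θ₁ - θ₂) - α • (gradient l θ₁ - gradient l θ₂) := by
      simp only [hgdef, smul_sub]; abel
    rw [heq]
    have h1 : ‖α • (gradient l θ₁ - gradient l θ₂)‖ ≤ α * (H * ‖θ₁ - θ₂‖) := by
      rw [norm_smul, Real.norm_eq_abs, abs_of_pos hα0]
      exact mul_le_mul_of_nonneg_left (hsmooth θ₁ θ₂) hα0.le
    have h2 := norm_sub_le (θ₁ - θ₂) (α • (gradient l θ₁ - gradient l θ₂))
    nlinarith [norm_nonneg (θ₁ - θ₂)]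
  -- norm bound on fderiv g
  have hBb : ∀ θ, ‖fderiv ℝ g θ‖ ≤ 2 := by
    intro θ
    rw [hfg θ]
    have h1 : ‖α • fderiv ℝ (gradient l) θ‖ ≤ α * H := by
      rw [norm_smul, Real.norm_eq_abs, abs_of_pos hα0]
      exact mul_le_mul_of_nonneg_left (hDb θ) hα0.le
    have h2 := norm_sub_le (ContinuousLinearMap.id ℝ E) (α • fderiv ℝ (gradient l) θ)
    have h3 : ‖ContinuousLinearMap.id ℝ E‖ ≤ 1 := ContinuousLinearMap.norm_id_le
    linarith
  intro θ₁ θ₂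
  -- chain rule
  have hchain : ∀ θ, fderiv ℝ (fun θ => l (θ - α • gradient l θ)) θ =
      (fderiv ℝ l (g θ)).comp (fderiv ℝ g θ) := by
    intro θ
    exact fderiv_comp θ (hld (g θ)) (hgdiff θ)
  rw [gradient_sub_norm, hchain θ₁, hchain θ₂]
  set A₁ := fderiv ℝ l (g θ₁)
  set A₂ := fderiv ℝ l (g θ₂)
  set B₁ := fderiv ℝ g θ₁
  set B₂ := fderiv ℝ g θ₂
  have hsplit : A₁.comp B₁ - A₂.comp B₂ = (A₁ - A₂).comp B₁ + A₂.comp (B₁ - B₂) := by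
    ext v
    simp [ContinuousLinearMap.comp_apply, map_sub]
  rw [hsplit]
  -- bound ‖A₁ - A₂‖
  have hA : ‖A₁ - A₂‖ ≤ H * (2 * ‖θ₁ - θ₂‖) := by
    rw [← gradient_sub_norm]
    calc ‖gradient l (g θ₁) - gradient l (g θ₂)‖ ≤ H * ‖g θ₁ - g θ₂‖ := hsmooth _ _
      _ ≤ H * (2 * ‖θ₁ - θ₂‖) := mul_le_mul_of_nonneg_left (hgLip θ₁ θ₂) hH.le
  -- bound ‖A₂‖
  have hA2 : ‖A₂‖ ≤ Φ := by
    rw [← gradient_norm_eq]; exact hgrad _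
  -- bound ‖B₁ - B₂‖
  have hB : ‖B₁ - B₂‖ ≤ α * (lam * ‖θ₁ - θ₂‖) := by
    have e1 : B₁ = ContinuousLinearMap.id ℝ E - α • fderiv ℝ (gradient l) θ₁ := hfg θ₁
    have e2 : B₂ = ContinuousLinearMap.id ℝ E - α • fderiv ℝ (gradient l) θ₂ := hfg θ₂
    have heq : B₁ - B₂ = α • (fderiv ℝ (gradient l) θ₂ - fderiv ℝ (gradient l) θ₁) := by
      rw [e1, e2, smul_sub]; abel
    rw [heq, norm_smul, Real.norm_eq_abs, abs_of_pos hα0]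
    have := hhess θ₂ θ₁
    rw [norm_sub_rev θ₂ θ₁] at this
    exact mul_le_mul_of_nonneg_left this hα0.le
  calc ‖(A₁ - A₂).comp B₁ + A₂.comp (B₁ - B₂)‖
      ≤ ‖(A₁ - A₂).comp B₁‖ + ‖A₂.comp (B₁ - B₂)‖ := norm_add_le _ _
    _ ≤ ‖A₁ - A₂‖ * ‖B₁‖ + ‖A₂‖ * ‖B₁ - B₂‖ :=
        add_le_add (ContinuousLinearMap.opNorm_comp_le _ _) (ContinuousLinearMap.opNorm_comp_le _ _)
    _ ≤ (H * (2 * ‖θ₁ - θ₂‖)) * 2 + Φ * (α * (lam * ‖θ₁ - θ₂‖)) := by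
        refine add_le_add (mul_le_mul hA (hBb θ₁) (norm_nonneg _) (by positivity)) ?_
        exact mul_le_mul hA2 hB (norm_nonneg _) hΦ0
    _ = (4 * H + α * lam * Φ) * ‖θ₁ - θ₂‖ := by ring

end Aux

/-- Smoothness of the MAML meta-function (Lemma 1). If `l : ℝ^d → ℝ` is `C²`,
`H`-smooth, has gradient norm bounded by `Φ`, and `λ`-Lipschitz Hessian, then for any
`α ∈ (0, 1/H]` the meta-function `L(θ) = l(θ − α ∇l(θ))` has
`(4H + αλΦ)`-Lipschitz gradient. -/
theorem meta_function_smooth {d : ℕ}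
    (l : EuclideanSpace ℝ (Fin d) → ℝ) (H Φ lam α : ℝ)
    (hl : ContDiff ℝ 2 l) (hH : 0 < H)
    (hsmooth : ∀ θ₁ θ₂, ‖gradient l θ₁ - gradient l θ₂‖ ≤ H * ‖θ₁ - θ₂‖)
    (hgrad : ∀ θ, ‖gradient l θ‖ ≤ Φ)
    (hhess : ∀ θ₁ θ₂, ‖fderiv ℝ (gradient l) θ₁ - fderiv ℝ (gradient l) θ₂‖ ≤
      lam * ‖θ₁ - θ₂‖)
    (hα : α ∈ Set.Ioc 0 (1 / H)) :
    let L : EuclideanSpace ℝ (Fin d) → ℝ := fun θ => l (θ - α • gradient l θ)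
    ∀ θ₁ θ₂, ‖gradient L θ₁ - gradient L θ₂‖ ≤ (4 * H + α * lam * Φ) * ‖θ₁ - θ₂‖ := by
  intro L
  exact meta_function_smooth_aux l H Φ lam α hl hH hsmooth hgrad hhess hα.1 hα.2
end

section
/- Let lₖ : ℝ^d → ℝ be H-smooth with ‖∇lₖ(θ)‖ ≤ Φ for all θ, and let L(θ) = (1/K) Σₖ lₖ(θ). If for all θ, (1/K) Σₖ ‖∇lₖ(θ) − ∇L(θ)‖² ≤ μ_G² and (1/K) Σₖ ‖∇²lₖ(θ) − ∇²L(θ)‖² ≤ μ_H², and Lₖ(θ) = lₖ(θ − α∇lₖ(θ)) with α ∈ (0, 1/H], then (1/K) Σₖ ‖∇Lₖ(θ) − ∇L̄(θ)‖² ≤ 3Φ²α²μ_H² + 192μ_G², where L̄ = (1/K) Σₖ Lₖ. -/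
open Finset InnerProductSpace in
lemma variance_le_aux {E : Type*} [NormedAddCommGroup E] [InnerProductSpace ℝ E]
    {K : ℕ} (x : Fin K → E) (y xbar : E) (hx : (K : ℝ) • xbar = ∑ k, x k) :
    ∑ k, ‖x k - xbar‖ ^ 2 ≤ ∑ k, ‖x k - y‖ ^ 2 := by
  have h1 : ∀ k : Fin K, ‖x k - y‖ ^ 2
      = ‖x k - xbar‖ ^ 2 + 2 * inner ℝ (x k - xbar) (xbar - y) + ‖xbar - y‖ ^ 2 := by
    intro k
    have h := norm_add_sq_real (x k - xbar) (xbar - y)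
    rw [sub_add_sub_cancel] at h
    exact h
  have hsum0 : ∑ k, (x k - xbar) = 0 := by
    rw [Finset.sum_sub_distrib, Finset.sum_const, Finset.card_univ, Fintype.card_fin,
      ← Nat.cast_smul_eq_nsmul ℝ, hx, sub_self]
  have h2 : ∑ k, (2 * inner ℝ (x k - xbar) (xbar - y) : ℝ) = 0 := by
    rw [← Finset.mul_sum, ← sum_inner, hsum0, inner_zero_left, mul_zero]
  calc ∑ k, ‖x k - xbar‖ ^ 2
      ≤ ∑ k, ‖x k - xbar‖ ^ 2 + (∑ k, (2 * inner ℝ (x k - xbar) (xbar - y) : ℝ)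
          + ∑ _k : Fin K, ‖xbar - y‖ ^ 2) := by
        rw [h2, zero_add]
        have : (0:ℝ) ≤ ∑ _k : Fin K, ‖xbar - y‖ ^ 2 :=
          Finset.sum_nonneg fun _ _ => by positivity
        linarith
    _ = ∑ k, ‖x k - y‖ ^ 2 := by
        simp_rw [h1]
        rw [← Finset.sum_add_distrib, ← Finset.sum_add_distrib]
        simp [add_assoc]

open InnerProductSpace in
/-- Gradient of a function is differentiable when the function is C². -/
lemma gradient_differentiable_of_contDiff {d : ℕ}
    (f : EuclideanSpace ℝ (Fin d) → ℝ) (hf : ContDiff ℝ 2 f) :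
    Differentiable ℝ (gradient f) := by
  have h1 : ContDiff ℝ 1 (fderiv ℝ f) := hf.fderiv_right (by norm_num)
  exact (toDual ℝ (EuclideanSpace ℝ (Fin d))).symm.differentiable.comp
    (h1.differentiable one_ne_zero)

open InnerProductSpace in
lemma norm_gradient_sub {d : ℕ} (f g : EuclideanSpace ℝ (Fin d) → ℝ)
    (x y : EuclideanSpace ℝ (Fin d)) :
    ‖gradient f x - gradient g y‖ = ‖fderiv ℝ f x - fderiv ℝ g y‖ := by
  rw [gradient, gradient, ← map_sub, LinearIsometryEquiv.norm_map]

open InnerProductSpace in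
lemma fderiv_eq_toDual_gradient {d : ℕ} (f : EuclideanSpace ℝ (Fin d) → ℝ)
    (x : EuclideanSpace ℝ (Fin d)) :
    fderiv ℝ f x = toDual ℝ (EuclideanSpace ℝ (Fin d)) (gradient f x) := by
  rw [gradient, LinearIsometryEquiv.apply_symm_apply]

open InnerProductSpace in
set_option maxHeartbeats 1000000 in
/-- Lemma 3: task dissimilarity propagates to the meta-functions. If each `lₖ` is
`H`-smooth with gradient bounded by `Φ`, the gradient and Hessian dissimilarities to
the average `L` are bounded by `μ_G²` and `μ_H²` respectively, and
`Lₖ(θ) = lₖ(θ − α∇lₖ(θ))` with `α ∈ (0, 1/H]`, then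
`(1/K) Σₖ ‖∇Lₖ(θ) − ∇L̄(θ)‖² ≤ 3Φ²α²μ_H² + 192μ_G²` for all `θ`. -/
theorem meta_task_dissimilarity {d K : ℕ} (hK : 0 < K)
    (lk : Fin K → EuclideanSpace ℝ (Fin d) → ℝ) (H Φ α μG μH : ℝ)
    (hl : ∀ k, ContDiff ℝ 2 (lk k)) (hH : 0 < H)
    (hsmooth : ∀ k θ₁ θ₂, ‖gradient (lk k) θ₁ - gradient (lk k) θ₂‖ ≤ H * ‖θ₁ - θ₂‖)
    (hgrad : ∀ k θ, ‖gradient (lk k) θ‖ ≤ Φ)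
    (hα : α ∈ Set.Ioc 0 (1 / H)) :
    let L : EuclideanSpace ℝ (Fin d) → ℝ := fun θ => (1 / (K : ℝ)) * ∑ k, lk k θ
    (∀ θ, (1 / (K : ℝ)) * ∑ k, ‖gradient (lk k) θ - gradient L θ‖ ^ 2 ≤ μG ^ 2) →
    (∀ θ, (1 / (K : ℝ)) *
        ∑ k, ‖fderiv ℝ (gradient (lk k)) θ - fderiv ℝ (gradient L) θ‖ ^ 2 ≤ μH ^ 2) →
    let Lk : Fin K → EuclideanSpace ℝ (Fin d) → ℝ :=
      fun k θ => lk k (θ - α • gradient (lk k) θ)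
    let Lbar : EuclideanSpace ℝ (Fin d) → ℝ := fun θ => (1 / (K : ℝ)) * ∑ k, Lk k θ
    ∀ θ, (1 / (K : ℝ)) * ∑ k, ‖gradient (Lk k) θ - gradient Lbar θ‖ ^ 2 ≤
      3 * Φ ^ 2 * α ^ 2 * μH ^ 2 + 192 * μG ^ 2 := by
  intro L hG hHess Lk Lbar θ
  obtain ⟨hα0, hα1⟩ := hα
  have hαH : α * H ≤ 1 := (le_div_iff₀ hH).mp hα1
  have hKpos : (0:ℝ) < K := Nat.cast_pos.mpr hK
  have hΦ0 : 0 ≤ Φ := le_trans (norm_nonneg _) (hgrad ⟨0, hK⟩ 0)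
  have hdiff : ∀ k, Differentiable ℝ (lk k) := fun k => (hl k).differentiable two_ne_zero
  have hgdiff : ∀ k, Differentiable ℝ (gradient (lk k)) :=
    fun k => gradient_differentiable_of_contDiff (lk k) (hl k)
  set g : Fin K → EuclideanSpace ℝ (Fin d) → EuclideanSpace ℝ (Fin d) :=
    fun k x => x - α • gradient (lk k) x with hgdef
  have hgdiffable : ∀ k, Differentiable ℝ (g k) :=
    fun k => differentiable_id.sub ((hgdiff k).const_smul α)
  set Hk : Fin K → (EuclideanSpace ℝ (Fin d) →L[ℝ] EuclideanSpace ℝ (Fin d)) :=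
    fun k => fderiv ℝ (gradient (lk k)) θ with hHkdef
  set Hb : EuclideanSpace ℝ (Fin d) →L[ℝ] EuclideanSpace ℝ (Fin d) :=
    fderiv ℝ (gradient L) θ with hHbdef
  set A : Fin K → (EuclideanSpace ℝ (Fin d) →L[ℝ] EuclideanSpace ℝ (Fin d)) :=
    fun k => ContinuousLinearMap.id ℝ _ - α • Hk k with hAdef
  set B : EuclideanSpace ℝ (Fin d) →L[ℝ] EuclideanSpace ℝ (Fin d) :=
    ContinuousLinearMap.id ℝ _ - α • Hb with hBdef
  have hA : ∀ k, fderiv ℝ (g k) θ = A k := by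
    intro k
    rw [hgdef, hAdef]
    rw [fderiv_fun_sub (g := fun y => α • gradient (lk k) y) differentiableAt_fun_id ((hgdiff k θ).const_smul α), fderiv_id',
      fderiv_fun_const_smul (hgdiff k θ), hHkdef]
  have hLkcomp : ∀ k, Lk k = (lk k) ∘ (g k) := fun k => rfl
  have hLkdiff : ∀ k, Differentiable ℝ (Lk k) := by
    intro k; rw [hLkcomp k]; exact (hdiff k).comp (hgdiffable k)
  have hLkderiv : ∀ k, fderiv ℝ (Lk k) θ = (fderiv ℝ (lk k) (g k θ)).comp (A k) := by
    intro k
    rw [hLkcomp k, fderiv_comp θ ((hdiff k) _) ((hgdiffable k) θ), hA]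
  -- gradient of averages
  have havg : ∀ (f : Fin K → EuclideanSpace ℝ (Fin d) → ℝ), (∀ k, Differentiable ℝ (f k)) →
      ∀ x, gradient (fun y => (1 / (K : ℝ)) * ∑ k, f k y) x
        = (1 / (K : ℝ)) • ∑ k, gradient (f k) x := by
    intro f hf x
    have hsum : DifferentiableAt ℝ (fun y => ∑ k, f k y) x :=
      DifferentiableAt.fun_sum fun k _ => (hf k x)
    rw [gradient, fderiv_const_mul hsum, fderiv_fun_sum fun k _ => (hf k x)]
    rw [map_smul, map_sum]
    rfl
  have hLgrad : ∀ x, gradient L x = (1 / (K : ℝ)) • ∑ k, gradient (lk k) x :=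
    havg lk hdiff
  have hLbargrad : gradient Lbar θ = (1 / (K : ℝ)) • ∑ k, gradient (Lk k) θ :=
    havg Lk hLkdiff θ
  -- Lipschitzness of gradient L
  have hLlip : ∀ a b, ‖gradient L a - gradient L b‖ ≤ H * ‖a - b‖ := by
    intro a b
    rw [hLgrad, hLgrad, ← smul_sub, ← Finset.sum_sub_distrib, norm_smul]
    have h1 : ‖∑ k, (gradient (lk k) a - gradient (lk k) b)‖ ≤ (K : ℝ) * (H * ‖a - b‖) := by
      calc ‖∑ k, (gradient (lk k) a - gradient (lk k) b)‖
          ≤ ∑ k, ‖gradient (lk k) a - gradient (lk k) b‖ := norm_sum_le _ _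
        _ ≤ ∑ _k : Fin K, H * ‖a - b‖ := Finset.sum_le_sum fun k _ => hsmooth k a b
        _ = (K : ℝ) * (H * ‖a - b‖) := by
            rw [Finset.sum_const, Finset.card_univ, Fintype.card_fin, nsmul_eq_mul]
    have h2 : ‖(1 : ℝ) / K‖ = 1 / (K : ℝ) := by
      rw [Real.norm_eq_abs, abs_of_pos (by positivity)]
    rw [h2]
    calc 1 / (K : ℝ) * ‖∑ k, (gradient (lk k) a - gradient (lk k) b)‖
        ≤ 1 / (K : ℝ) * ((K : ℝ) * (H * ‖a - b‖)) := by
          apply mul_le_mul_of_nonneg_left h1 (by positivity)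
      _ = H * ‖a - b‖ := by field_simp
  have hHb_le : ‖Hb‖ ≤ H := by
    rw [hHbdef]
    exact norm_fderiv_le_of_lip' ℝ hH.le (Filter.Eventually.of_forall fun x => hLlip x θ)
  have hB_le : ‖B‖ ≤ 2 := by
    calc ‖B‖ ≤ ‖ContinuousLinearMap.id ℝ (EuclideanSpace ℝ (Fin d))‖ + ‖α • Hb‖ :=
        norm_sub_le _ _
      _ ≤ 1 + α * H := by
          apply add_le_add ContinuousLinearMap.norm_id_le
          rw [show ‖α • Hb‖ = ‖α‖ * ‖Hb‖ from norm_smul α Hb,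
            Real.norm_eq_abs, abs_of_pos hα0]
          exact mul_le_mul_of_nonneg_left hHb_le hα0.le
      _ ≤ 2 := by nlinarith
  -- reference point
  set θ' : EuclideanSpace ℝ (Fin d) := θ - α • gradient L θ with hθ'def
  set h : EuclideanSpace ℝ (Fin d) →L[ℝ] ℝ := fderiv ℝ L θ' with hhdef
  set y : EuclideanSpace ℝ (Fin d) := (toDual ℝ _).symm (h.comp B) with hydef
  set γ : Fin K → ℝ := fun k => ‖gradient (lk k) θ - gradient L θ‖ with hγdef
  set δ : Fin K → ℝ := fun k => ‖gradient (lk k) θ' - gradient L θ'‖ with hδdef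
  have key : ∀ k, ‖gradient (Lk k) θ - y‖
      ≤ Φ * (α * ‖Hk k - Hb‖) + 2 * (γ k + δ k) := by
    intro k
    have e1 : ‖gradient (Lk k) θ - y‖ = ‖fderiv ℝ (Lk k) θ - h.comp B‖ := by
      rw [gradient, hydef, ← map_sub, LinearIsometryEquiv.norm_map]
    rw [e1, hLkderiv k]
    set Dk : EuclideanSpace ℝ (Fin d) →L[ℝ] ℝ := fderiv ℝ (lk k) (g k θ) with hDkdef
    have e2 : Dk.comp (A k) - h.comp B = Dk.comp (A k - B) + (Dk - h).comp B := by
      ext x; simp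
    rw [e2]
    have hDk_le : ‖Dk‖ ≤ Φ := by
      rw [hDkdef, fderiv_eq_toDual_gradient, LinearIsometryEquiv.norm_map]
      exact hgrad k _
    have hAB : ‖A k - B‖ = α * ‖Hk k - Hb‖ := by
      have e4 : A k - B = α • (Hb - Hk k) := by
        simp only [hAdef, hBdef, smul_sub]
        abel
      rw [e4, show ‖α • (Hb - Hk k)‖ = ‖α‖ * ‖Hb - Hk k‖ from norm_smul α (Hb - Hk k),
        Real.norm_eq_abs, abs_of_pos hα0, norm_sub_rev]
    have hDh : ‖Dk - h‖ ≤ γ k + δ k := by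
      have e3 : ‖Dk - h‖ = ‖gradient (lk k) (g k θ) - gradient L θ'‖ := by
        rw [hDkdef, hhdef, ← norm_gradient_sub]
      rw [e3]
      have t1 : ‖gradient (lk k) (g k θ) - gradient (lk k) θ'‖ ≤ γ k := by
        calc ‖gradient (lk k) (g k θ) - gradient (lk k) θ'‖
            ≤ H * ‖g k θ - θ'‖ := hsmooth k _ _
          _ = H * (α * γ k) := by
              have e5 : g k θ - θ' = α • (gradient L θ - gradient (lk k) θ) := by
                simp only [hgdef, hθ'def, smul_sub]
                abel
              rw [e5, show ‖α • (gradient L θ - gradient (lk k) θ)‖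
                  = ‖α‖ * ‖gradient L θ - gradient (lk k) θ‖ from norm_smul α (gradient L θ - gradient (lk k) θ),
                Real.norm_eq_abs, abs_of_pos hα0, hγdef, norm_sub_rev]
          _ ≤ 1 * γ k := by
              rw [← mul_assoc]
              apply mul_le_mul_of_nonneg_right _ (norm_nonneg _)
              nlinarith
          _ = γ k := one_mul _
      calc ‖gradient (lk k) (g k θ) - gradient L θ'‖
          ≤ ‖gradient (lk k) (g k θ) - gradient (lk k) θ'‖
            + ‖gradient (lk k) θ' - gradient L θ'‖ := by
            have := norm_add_le (gradient (lk k) (g k θ) - gradient (lk k) θ')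
              (gradient (lk k) θ' - gradient L θ')
            rw [sub_add_sub_cancel] at this
            exact this
        _ ≤ γ k + δ k := add_le_add t1 le_rfl
    calc ‖Dk.comp (A k - B) + (Dk - h).comp B‖
        ≤ ‖Dk.comp (A k - B)‖ + ‖(Dk - h).comp B‖ := norm_add_le _ _
      _ ≤ ‖Dk‖ * ‖A k - B‖ + ‖Dk - h‖ * ‖B‖ :=
          add_le_add (ContinuousLinearMap.opNorm_comp_le _ _)
            (ContinuousLinearMap.opNorm_comp_le _ _)
      _ ≤ Φ * (α * ‖Hk k - Hb‖) + (γ k + δ k) * 2 := by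
          apply add_le_add
          · rw [hAB]
            apply mul_le_mul_of_nonneg_right hDk_le (by positivity)
          · apply mul_le_mul hDh hB_le (norm_nonneg _)
            positivity
      _ = Φ * (α * ‖Hk k - Hb‖) + 2 * (γ k + δ k) := by ring
  have keysq : ∀ k, ‖gradient (Lk k) θ - y‖ ^ 2
      ≤ 3 * Φ ^ 2 * α ^ 2 * ‖Hk k - Hb‖ ^ 2 + 12 * γ k ^ 2 + 12 * δ k ^ 2 := by
    intro k
    have hk := key k
    have h0 : (0:ℝ) ≤ ‖gradient (Lk k) θ - y‖ := norm_nonneg _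
    have ha : (0:ℝ) ≤ Φ * (α * ‖Hk k - Hb‖) := by positivity
    have hb : (0:ℝ) ≤ γ k := norm_nonneg _
    have hc : (0:ℝ) ≤ δ k := norm_nonneg _
    nlinarith [sq_nonneg (Φ * (α * ‖Hk k - Hb‖) - 2 * γ k),
      sq_nonneg (Φ * (α * ‖Hk k - Hb‖) - 2 * δ k), sq_nonneg (γ k - δ k),
      mul_nonneg h0 h0]
  -- variance reduction
  have hvar : ∑ k, ‖gradient (Lk k) θ - gradient Lbar θ‖ ^ 2
      ≤ ∑ k, ‖gradient (Lk k) θ - y‖ ^ 2 := by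
    apply variance_le_aux (fun k => gradient (Lk k) θ) y
    rw [hLbargrad, smul_smul]
    rw [mul_one_div, div_self hKpos.ne', one_smul]
  have hsum2 : ∑ k, ‖gradient (Lk k) θ - y‖ ^ 2
      ≤ 3 * Φ ^ 2 * α ^ 2 * (∑ k, ‖Hk k - Hb‖ ^ 2)
        + 12 * (∑ k, γ k ^ 2) + 12 * (∑ k, δ k ^ 2) := by
    calc ∑ k, ‖gradient (Lk k) θ - y‖ ^ 2
        ≤ ∑ k, (3 * Φ ^ 2 * α ^ 2 * ‖Hk k - Hb‖ ^ 2 + 12 * γ k ^ 2 + 12 * δ k ^ 2) :=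
          Finset.sum_le_sum fun k _ => keysq k
      _ = 3 * Φ ^ 2 * α ^ 2 * (∑ k, ‖Hk k - Hb‖ ^ 2)
          + 12 * (∑ k, γ k ^ 2) + 12 * (∑ k, δ k ^ 2) := by
          rw [Finset.sum_add_distrib, Finset.sum_add_distrib, ← Finset.mul_sum,
            ← Finset.mul_sum, ← Finset.mul_sum]
  have hH2 : (1 / (K : ℝ)) * ∑ k, ‖Hk k - Hb‖ ^ 2 ≤ μH ^ 2 := hHess θ
  have hG1 : (1 / (K : ℝ)) * ∑ k, γ k ^ 2 ≤ μG ^ 2 := hG θ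
  have hG2 : (1 / (K : ℝ)) * ∑ k, δ k ^ 2 ≤ μG ^ 2 := hG θ'
  have hμG0 : (0:ℝ) ≤ μG ^ 2 := sq_nonneg _
  have hc1 : (0:ℝ) ≤ 3 * Φ ^ 2 * α ^ 2 := by positivity
  have hKinv : (0:ℝ) < 1 / (K : ℝ) := by positivity
  calc (1 / (K : ℝ)) * ∑ k, ‖gradient (Lk k) θ - gradient Lbar θ‖ ^ 2
      ≤ (1 / (K : ℝ)) * ∑ k, ‖gradient (Lk k) θ - y‖ ^ 2 :=
        mul_le_mul_of_nonneg_left hvar hKinv.le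
    _ ≤ (1 / (K : ℝ)) * (3 * Φ ^ 2 * α ^ 2 * (∑ k, ‖Hk k - Hb‖ ^ 2)
          + 12 * (∑ k, γ k ^ 2) + 12 * (∑ k, δ k ^ 2)) :=
        mul_le_mul_of_nonneg_left hsum2 hKinv.le
    _ = 3 * Φ ^ 2 * α ^ 2 * ((1 / (K : ℝ)) * ∑ k, ‖Hk k - Hb‖ ^ 2)
          + 12 * ((1 / (K : ℝ)) * ∑ k, γ k ^ 2)
          + 12 * ((1 / (K : ℝ)) * ∑ k, δ k ^ 2) := by ring
    _ ≤ 3 * Φ ^ 2 * α ^ 2 * μH ^ 2 + 12 * μG ^ 2 + 12 * μG ^ 2 := by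
        apply add_le_add (add_le_add _ _) _
        · exact mul_le_mul_of_nonneg_left hH2 hc1
        · exact mul_le_mul_of_nonneg_left hG1 (by norm_num)
        · exact mul_le_mul_of_nonneg_left hG2 (by norm_num)
    _ ≤ 3 * Φ ^ 2 * α ^ 2 * μH ^ 2 + 192 * μG ^ 2 := by nlinarith
end

section
/- Fix K SUs with positive computation constants κₖγₖDₖ and maximum frequencies fₖ^max. For a designated straggler l, define f_l* = min{ (b₁/b₂)^{1/3}, minₖ (κ_lγ_lD_l fₖ^max)/(κₖγₖDₖ) } and fₖ* = (κₖγₖDₖ f_l*)/(κ_lγ_lD_l) for k ≠ l, with b₁ = ρ₂κ_lγ_lD_l and b₂ = 2ρ₁ Σₖ ςₖ(κₖγₖDₖ)³/(κ_lγ_lD_l)². Then (f₁*, …, f_K*) is feasible (0 < fₖ* ≤ fₖ^max) and minimizes Q(f) = ρ₁ Σₖ ςₖκₖγₖDₖ fₖ² + ρ₂ κ_lγ_lD_l / f_l subject to (κₖγₖDₖ) f_l ≤ (κ_lγ_lD_l) fₖ for all k and 0 < fₖ ≤ fₖ^max. -/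
open Finset

/-- Key 1-D comparison: `g(y) ≤ g(t)` for `g(x) = c x² + b₁/x` with `b₁ = 2 c xs³`,
in the two relevant cases. -/
lemma key_1d (c b₁ xs t y : ℝ) (hc : 0 < c) (ht : 0 < t) (hy : 0 < y) (hxs : 0 < xs)
    (hb : b₁ = 2 * c * xs ^ 3)
    (h : (t ≤ y ∧ y ≤ xs) ∨ (xs ≤ t ∧ xs = y)) :
    c * y ^ 2 + b₁ / y ≤ c * t ^ 2 + b₁ / t := by
  rw [← sub_nonneg]
  have hid : (c * t ^ 2 + b₁ / t) - (c * y ^ 2 + b₁ / y)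
      = (t - y) * (c * t * y * (t + y) - b₁) / (t * y) := by
    field_simp
    ring
  rw [hid]
  apply div_nonneg _ (le_of_lt (mul_pos ht hy))
  rcases h with ⟨h1, h2⟩ | ⟨h1, h2⟩
  · have htxs : t ≤ xs := h1.trans h2
    have h3a : t * y ≤ xs * xs := mul_le_mul htxs h2 hy.le hxs.le
    have h3b : t * y * (t + y) ≤ xs * xs * (t + y) :=
      mul_le_mul_of_nonneg_right h3a (by linarith)
    have h3c : xs * xs * (t + y) ≤ xs * xs * (2 * xs) :=
      mul_le_mul_of_nonneg_left (by linarith) (by positivity)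
    have h3 : t * y * (t + y) ≤ 2 * xs ^ 3 := by nlinarith
    have hn1 : t - y ≤ 0 := by linarith
    have hn2 : c * t * y * (t + y) - b₁ ≤ 0 := by nlinarith
    nlinarith [mul_nonneg (neg_nonneg.mpr hn1) (neg_nonneg.mpr hn2)]
  · subst h2
    have h3 : 2 * xs ^ 3 ≤ t * xs * (t + xs) := by nlinarith [mul_pos ht hxs]
    apply mul_nonneg (by linarith)
    nlinarith

/-- Lemma 4 (optimal CPU frequencies given a straggler). With positive constants
`ρ₁, ρ₂, ςₖ, κₖγₖDₖ =: Aₖ, fₖ^max` and a designated straggler `l`, set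
`b₁ = ρ₂ A_l`, `b₂ = 2ρ₁ Σₖ ςₖ Aₖ³ / A_l²`,
`f_l* = min{(b₁/b₂)^{1/3}, minₖ A_l fₖ^max / Aₖ}` and `fₖ* = Aₖ f_l* / A_l`.
Then `f*` is feasible and minimizes
`Q(f) = ρ₁ Σₖ ςₖ Aₖ fₖ² + ρ₂ A_l / f_l` subject to
`Aₖ f_l ≤ A_l fₖ` and `0 < fₖ ≤ fₖ^max` for all `k`. -/
theorem optimal_cpu_frequencies {K : ℕ} [NeZero K]
    (ρ₁ ρ₂ : ℝ) (ς A fmax : Fin K → ℝ) (l : Fin K)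
    (hρ₁ : 0 < ρ₁) (hρ₂ : 0 < ρ₂) (hς : ∀ k, 0 < ς k) (hA : ∀ k, 0 < A k)
    (hfmax : ∀ k, 0 < fmax k) :
    let b₁ : ℝ := ρ₂ * A l
    let b₂ : ℝ := 2 * ρ₁ * ∑ k, ς k * (A k) ^ 3 / (A l) ^ 2
    let flstar : ℝ :=
      min ((b₁ / b₂) ^ ((1 : ℝ) / 3)) (Finset.univ.inf' ⟨l, mem_univ l⟩
        fun k => A l * fmax k / A k)
    let fstar : Fin K → ℝ := fun k => A k * flstar / A l
    let feasible : (Fin K → ℝ) → Prop := fun f =>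
      ∀ k, 0 < f k ∧ f k ≤ fmax k ∧ A k * f l ≤ A l * f k
    let Q : (Fin K → ℝ) → ℝ := fun f =>
      ρ₁ * ∑ k, ς k * A k * (f k) ^ 2 + ρ₂ * A l / f l
    feasible fstar ∧ ∀ f, feasible f → Q fstar ≤ Q f := by
  intro b₁ b₂ flstar fstar feasible Q
  have hb₁ : 0 < b₁ := mul_pos hρ₂ (hA l)
  have hb₂ : 0 < b₂ := by
    apply mul_pos (by linarith)
    apply Finset.sum_pos _ ⟨l, mem_univ l⟩
    intro k _
    exact div_pos (mul_pos (hς k) (pow_pos (hA k) 3)) (pow_pos (hA l) 2)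
  set xs : ℝ := (b₁ / b₂) ^ ((1 : ℝ) / 3) with hxs_def
  have hxs : 0 < xs := Real.rpow_pos_of_pos (div_pos hb₁ hb₂) _
  have hxs3 : xs ^ 3 = b₁ / b₂ := by
    rw [hxs_def, ← Real.rpow_natCast ((b₁ / b₂) ^ ((1:ℝ)/3)) 3,
      ← Real.rpow_mul (le_of_lt (div_pos hb₁ hb₂))]
    norm_num
  set m : ℝ := Finset.univ.inf' ⟨l, mem_univ l⟩ (fun k => A l * fmax k / A k) with hm_def
  have hm : 0 < m := by
    rw [hm_def]; apply (Finset.lt_inf'_iff ..).2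
    intro k _
    exact div_pos (mul_pos (hA l) (hfmax k)) (hA k)
  have hflpos : 0 < flstar := lt_min hxs hm
  have hfl_xs : flstar ≤ xs := min_le_left _ _
  have hfl_m : flstar ≤ m := min_le_right _ _
  have hfl_le : ∀ k, flstar ≤ A l * fmax k / A k := fun k =>
    le_trans hfl_m (Finset.inf'_le _ (mem_univ k))
  have hfstar_l : fstar l = flstar := by
    show A l * flstar / A l = flstar
    rw [mul_comm, mul_div_assoc, div_self (ne_of_gt (hA l)), mul_one]
  have hfeas : feasible fstar := by
    intro k
    refine ⟨div_pos (mul_pos (hA k) hflpos) (hA l), ?_, ?_⟩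
    · have hk := hfl_le k
      rw [le_div_iff₀ (hA k)] at hk
      rw [div_le_iff₀ (hA l)]
      nlinarith
    · show A k * fstar l ≤ A l * (A k * flstar / A l)
      rw [hfstar_l]
      refine le_of_eq ?_
      have hAl : A l ≠ 0 := (hA l).ne'
      field_simp
  refine ⟨hfeas, ?_⟩
  intro f hf
  -- g-form of Q fstar
  have hsum : ∀ x : ℝ, ∑ k, ς k * A k * (A k * x / A l) ^ 2
      = (∑ k, ς k * (A k) ^ 3 / (A l) ^ 2) * x ^ 2 := by
    intro x
    rw [Finset.sum_mul]
    refine Finset.sum_congr rfl fun k _ => ?_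
    field_simp
  have hQstar : Q fstar = (b₂ / 2) * flstar ^ 2 + b₁ / flstar := by
    show ρ₁ * ∑ k, ς k * A k * (A k * flstar / A l) ^ 2 + ρ₂ * A l / fstar l
      = (b₂ / 2) * flstar ^ 2 + b₁ / flstar
    rw [hsum, hfstar_l]
    show ρ₁ * ((∑ k, ς k * (A k) ^ 3 / (A l) ^ 2) * flstar ^ 2) + b₁ / flstar = _
    rw [show b₂ / 2 = ρ₁ * ∑ k, ς k * (A k) ^ 3 / (A l) ^ 2 by rw [show b₂ = 2 * ρ₁ * ∑ k, ς k * (A k) ^ 3 / (A l) ^ 2 from rfl]; ring]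
    ring
  have hfl := (hf l).1
  -- Q f ≥ g (f l)
  have hQf : (b₂ / 2) * (f l) ^ 2 + b₁ / (f l) ≤ Q f := by
    have hstep : ∑ k, ς k * A k * (A k * f l / A l) ^ 2 ≤ ∑ k, ς k * A k * (f k) ^ 2 := by
      refine Finset.sum_le_sum fun k _ => ?_
      have h1 : A k * f l / A l ≤ f k := by
        rw [div_le_iff₀ (hA l)]
        have := (hf k).2.2
        nlinarith
      have h2 : (0:ℝ) ≤ A k * f l / A l := le_of_lt (div_pos (mul_pos (hA k) hfl) (hA l))
      have := pow_le_pow_left₀ h2 h1 2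
      nlinarith [mul_pos (hς k) (hA k)]
    have : ρ₁ * ∑ k, ς k * A k * (A k * f l / A l) ^ 2 ≤ ρ₁ * ∑ k, ς k * A k * (f k) ^ 2 :=
      by nlinarith
    rw [hsum] at this
    show (b₂ / 2) * (f l) ^ 2 + b₁ / (f l) ≤ ρ₁ * ∑ k, ς k * A k * (f k) ^ 2 + ρ₂ * A l / f l
    have hb2eq : (b₂ / 2) * (f l) ^ 2 = ρ₁ * ((∑ k, ς k * (A k) ^ 3 / (A l) ^ 2) * (f l) ^ 2) := by
      rw [show b₂ = 2 * ρ₁ * ∑ k, ς k * (A k) ^ 3 / (A l) ^ 2 from rfl]; ring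
    rw [hb2eq]
    have : ρ₂ * A l / f l = b₁ / f l := rfl
    linarith [this]
  -- f l ≤ m
  have hflm : f l ≤ m := by
    rw [hm_def]
    apply Finset.le_inf'
    intro k _
    rw [le_div_iff₀ (hA k)]
    have h1 := (hf k).2.2
    have h2 := (hf k).2.1
    nlinarith [hA l, hA k]
  -- key comparison
  have hb : b₁ = 2 * (b₂ / 2) * xs ^ 3 := by
    rw [hxs3]
    field_simp
  have hcase : (f l ≤ flstar ∧ flstar ≤ xs) ∨ (xs ≤ f l ∧ xs = flstar) := by
    rcases le_total (f l) flstar with h | h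
    · exact Or.inl ⟨h, hfl_xs⟩
    · by_cases hxm : xs ≤ m
      · have : flstar = xs := min_eq_left hxm
        exact Or.inr ⟨this ▸ h, this.symm⟩
      · have : flstar = m := min_eq_right (le_of_not_ge hxm)
        exact Or.inl ⟨this ▸ hflm, hfl_xs⟩
  have := key_1d (b₂ / 2) b₁ xs (f l) flstar (by linarith) hfl hflpos hxs hb hcase
  rw [hQstar]
  linarith
end

section
/- Fix positive constants I_n, W, N₀, h_k, ξ, χ with p_k^max ≥ (I_n + W N₀)(2^{ξ/(W χ)} − 1)/h_k. Then the minimizer of p ↦ p / (W log₂(1 + h_k p/(I_n + W N₀))) over the feasible set {p : 0 < p ≤ p_k^max and ξ/(W log₂(1 + h_k p/(I_n + W N₀))) ≤ χ} is p* = (I_n + W N₀)(2^{ξ/(W χ)} − 1)/h_k, i.e., the latency constraint is active at the optimum. -/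
lemma log_mul_aux (u v : ℝ) (hu : 0 < u) (huv : u ≤ v) :
    u * Real.log (1 + v) ≤ v * Real.log (1 + u) := by
  have hv : 0 < v := lt_of_lt_of_le hu huv
  have ht : (1 : ℝ) ≤ v / u := (one_le_div hu).2 huv
  have hb := one_add_mul_self_le_rpow_one_add (by linarith : (-1:ℝ) ≤ u) ht
  have hvu : v / u * u = v := div_mul_cancel₀ v hu.ne'
  have hlog : Real.log (1 + v) ≤ (v / u) * Real.log (1 + u) := by
    have h1 : Real.log (1 + v) ≤ Real.log ((1 + u) ^ (v / u)) := by
      apply Real.log_le_log (by linarith)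
      calc 1 + v = 1 + v / u * u := by rw [hvu]
        _ ≤ (1 + u) ^ (v / u) := hb
    rwa [Real.log_rpow (by linarith)] at h1
  calc u * Real.log (1 + v) ≤ u * ((v / u) * Real.log (1 + u)) :=
        mul_le_mul_of_nonneg_left hlog hu.le
    _ = v * Real.log (1 + u) := by field_simp

lemma logb_mul_aux (u v : ℝ) (hu : 0 < u) (huv : u ≤ v) :
    u * Real.logb 2 (1 + v) ≤ v * Real.logb 2 (1 + u) := by
  have h2 : (0:ℝ) < Real.log 2 := Real.log_pos one_lt_two
  have h := log_mul_aux u v hu huv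
  simp only [Real.logb]
  rw [← mul_div_assoc, ← mul_div_assoc, div_le_div_iff₀ h2 h2]
  nlinarith [h, h2]

/-- Lemma 5 (optimal transmit power under a transmission-deadline constraint).
With positive constants `I_n, W, N₀, h_k, ξ, χ` and
`p* = (I_n + W N₀)(2^{ξ/(Wχ)} − 1)/h_k ≤ p_k^max`, the power `p*` is feasible and
minimizes the energy `p / (W log₂(1 + h_k p/(I_n + W N₀)))` over all feasible powers
`0 < p ≤ p_k^max` meeting the deadline
`ξ/(W log₂(1 + h_k p/(I_n + W N₀))) ≤ χ`; i.e. the latency constraint is active. -/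
theorem optimal_transmit_power (In W N₀ h ξ χ pmax : ℝ)
    (hIn : 0 < In) (hW : 0 < W) (hN₀ : 0 < N₀) (hh : 0 < h) (hξ : 0 < ξ) (hχ : 0 < χ)
    (hpmax : (In + W * N₀) * ((2 : ℝ) ^ (ξ / (W * χ)) - 1) / h ≤ pmax) :
    let pstar : ℝ := (In + W * N₀) * ((2 : ℝ) ^ (ξ / (W * χ)) - 1) / h
    let rate : ℝ → ℝ := fun p => W * Real.logb 2 (1 + h * p / (In + W * N₀))
    let feasible : ℝ → Prop := fun p => 0 < p ∧ p ≤ pmax ∧ ξ / rate p ≤ χ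
    feasible pstar ∧ ∀ p, feasible p → pstar / rate pstar ≤ p / rate p := by
  intro pstar rate feasible
  set A : ℝ := In + W * N₀ with hA
  have hApos : 0 < A := by positivity
  set e : ℝ := ξ / (W * χ) with he
  have hepos : 0 < e := by positivity
  have h2e : (1:ℝ) < (2:ℝ) ^ e :=
    (Real.one_lt_rpow_iff_of_pos (y := e) (by norm_num)).2 (Or.inl ⟨one_lt_two, hepos⟩)
  have hpstar_pos : 0 < pstar := by
    have : 0 < A * ((2:ℝ) ^ e - 1) := mul_pos hApos (by linarith)
    exact div_pos this hh
  have hxstar : h * pstar / A = (2:ℝ) ^ e - 1 := by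
    show h * (A * ((2:ℝ) ^ e - 1) / h) / A = (2:ℝ) ^ e - 1
    field_simp
  have hrate_star : rate pstar = ξ / χ := by
    show W * Real.logb 2 (1 + h * pstar / A) = ξ / χ
    rw [hxstar]
    have h1 : (1 : ℝ) + ((2:ℝ) ^ e - 1) = (2:ℝ) ^ e := by ring
    rw [h1, Real.logb_rpow (by norm_num) (by norm_num), he]
    field_simp
  have hratestar_pos : 0 < rate pstar := by rw [hrate_star]; positivity
  have hrate_pos : ∀ p : ℝ, 0 < p → 0 < rate p := by
    intro p hp
    have hx : 0 < h * p / A := by positivity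
    exact mul_pos hW (Real.logb_pos one_lt_two (by linarith))
  have hfeas : feasible pstar := by
    refine ⟨hpstar_pos, hpmax, ?_⟩
    rw [hrate_star]
    have : ξ / (ξ / χ) = χ := by field_simp
    exact le_of_eq this
  refine ⟨hfeas, ?_⟩
  intro p ⟨hp0, hpm, hdl⟩
  have hrp : 0 < rate p := hrate_pos p hp0
  have hrge : ξ / χ ≤ rate p := by
    rw [div_le_iff₀ hrp] at hdl
    rw [div_le_iff₀ hχ]
    nlinarith
  have hxineq : h * pstar / A ≤ h * p / A := by
    rw [hxstar]
    have hlb : e ≤ Real.logb 2 (1 + h * p / A) := by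
      have hWe : W * e = ξ / χ := by rw [he]; field_simp
      have : W * e ≤ W * Real.logb 2 (1 + h * p / A) := by rw [hWe]; exact hrge
      exact le_of_mul_le_mul_left this hW
    have hx : 0 < 1 + h * p / A := by
      have : 0 < h * p / A := by positivity
      linarith
    have h2 : (2:ℝ) ^ e ≤ 1 + h * p / A := by
      calc (2:ℝ) ^ e ≤ (2:ℝ) ^ Real.logb 2 (1 + h * p / A) :=
            Real.rpow_le_rpow_of_exponent_le (by norm_num) hlb
        _ = 1 + h * p / A := Real.rpow_logb (by norm_num) (by norm_num) hx
    linarith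
  have hppstar : pstar ≤ p := by
    have h1 : h * pstar ≤ h * p := by
      have := (div_le_div_iff_of_pos_right hApos).mp hxineq
      exact this
    exact le_of_mul_le_mul_left h1 hh
  have hkey := logb_mul_aux (h * pstar / A) (h * p / A) (by positivity) hxineq
  set L1 := Real.logb 2 (1 + h * p / A) with hL1
  set L2 := Real.logb 2 (1 + h * pstar / A) with hL2
  have hc : 0 < h / A := by positivity
  have h1 : pstar * L1 ≤ p * L2 := by
    have hm : h / A * (pstar * L1) ≤ h / A * (p * L2) := by
      calc h / A * (pstar * L1) = h * pstar / A * L1 := by ring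
        _ ≤ h * p / A * L2 := hkey
        _ = h / A * (p * L2) := by ring
    exact le_of_mul_le_mul_left hm hc
  rw [div_le_div_iff₀ hratestar_pos hrp]
  show pstar * (W * L1) ≤ p * (W * L2)
  nlinarith [h1, mul_le_mul_of_nonneg_left h1 hW.le]
end
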